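/- Fix 0 ≤ n ≤ N−1 and let (c_0, c_1, …, c_N) be the coefficient list of the twisted-polynomial product (τ + ⟪Θ⟫_{N−n}^{N−1}) ∘ ⋯ ∘ (τ + ⟪Θ⟫_{N−n}^{1}) ∘ (τ + ⟪Θ⟫_{N−n}^{0}). Then in F(t): t^n / ∏_{k=0}^{N−1} (t − η^{q^k}) = (η^{q^{N−1}})^{n} · (∏_{m=0}^{N−1} (θ − η^{q^{N−1−m}})^{−q^m}) · (θ − η)^{W_N} · ∑_{i=0}^{N} c_i · s_i(t). (Via the Anderson-motive definition a · s_0 = Ψ_a s_0 with τ^i s_0 = s_i, this is exactly the statement that the standard rank-one Drinfeld A-module Ψ satisfies Ψ_{T_n} = η^{n/q} · Θ^{γ_N(σ) − W_N} · (τ + ⟪Θ⟫_{N−n}^{N−1}) ∘ ⋯ ∘ (τ + ⟪Θ⟫_{N−n}^{0}), where T_n = t^n/ρ(t).) -/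

import Mathlib

/-!
Let `S_m = ∑ᵢ c_{m,i} sᵢ` be the image of `s₀` under the first `m` factors
`(τ + a_{m-1}) ∘ ⋯ ∘ (τ + a_0)`, `a_i = ⟪Θ⟫_l^i`, `l = N - n`. Peeling off the outer factor and
using `s_{i+1} = f^{(0)} · s_i^{(1)}` gives `S_{m+1} = f^{(0)} S_m^{(1)} + a_m S_m`, where `^{(1)}`
is the Frobenius twist `(θ, η, a) ↦ (θ^q, η^q, a^q)`. An induction on `m` that runs over all twists
at once shows `S_m = κ_m t^{m-l} / ∏_{k<m} (t - η^{q^k})` with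
`κ_m = ∏_{j<m} (θ - η^{q^{m-1-j}})^{q^j} / ((θ - η)^{W_m} η^{(m-l) q^{m-1}})`: the step is the
partial fraction `f^{(0)} (t - η) = (θ - t)/(θ - η)` together with two recursions for `κ_m`, one
for `m < l`, where the power of `t` stays `0`, and one for `m ≥ l`, where it goes up by one.
The constant in the theorem is `κ_N⁻¹`.
-/

open Finset RatFunc

namespace StandardDrinfeld

variable {F : Type*} [Field F] (q : ℕ)

/-- `prodCoeff q a m i` is the coefficient of `τ ^ i` in `(τ + a (m-1)) ∘ ⋯ ∘ (τ + a 0)`,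
where `τ * x = x ^ q * τ`. -/
def prodCoeff (a : ℕ → F) : ℕ → ℕ → F
  | 0, i => if i = 0 then 1 else 0
  | m + 1, 0 => a m * prodCoeff a m 0
  | m + 1, i + 1 => prodCoeff a m i ^ q + a m * prodCoeff a m (i + 1)

variable {q}

lemma eq_prodCoeff {a : ℕ → F} {c : ℕ → ℕ → F} (h0 : ∀ i, c 0 i = if i = 0 then 1 else 0)
    (hz : ∀ m, c (m + 1) 0 = a m * c m 0)
    (hs : ∀ m i, c (m + 1) (i + 1) = c m i ^ q + a m * c m (i + 1)) :
    c = prodCoeff q a := by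
  ext m i
  induction m generalizing i with
  | zero => exact h0 i
  | succ m ih => cases i <;> simp only [prodCoeff, hz, hs, ih]

lemma prodCoeff_eq_zero_of_lt (hq : q ≠ 0) (a : ℕ → F) {m i : ℕ} (h : m < i) :
    prodCoeff q a m i = 0 := by
  induction m generalizing i with
  | zero => simp [prodCoeff, h.ne']
  | succ m ih =>
    obtain ⟨i, rfl⟩ := Nat.exists_eq_add_one_of_ne_zero (by omega : i ≠ 0)
    rw [prodCoeff, ih (by omega), ih (by omega), zero_pow hq, mul_zero, add_zero]

lemma map_prodCoeff {F' : Type*} [Field F'] (σ : F →+* F') (a : ℕ → F) (m i : ℕ) :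
    σ (prodCoeff q a m i) = prodCoeff q (fun k => σ (a k)) m i := by
  induction m generalizing i with
  | zero => cases i <;> simp [prodCoeff]
  | succ m ih => cases i <;> simp [prodCoeff, ih]

lemma sum_prodCoeff_succ {R : Type*} [CommSemiring R] (hq : q ≠ 0) (C : F →+* R) (f : ℕ → R)
    (a : ℕ → F) (m : ℕ) :
    ∑ i ∈ range (m + 2), C (prodCoeff q a (m + 1) i) * ∏ k ∈ range i, f k
      = f 0 * ∑ i ∈ range (m + 1), C (prodCoeff q a m i ^ q) * ∏ k ∈ range i, f (k + 1)
        + C (a m) * ∑ i ∈ range (m + 1), C (prodCoeff q a m i) * ∏ k ∈ range i, f k := by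
  have htop : ∑ i ∈ range (m + 2), C (prodCoeff q a m i) * ∏ k ∈ range i, f k
      = ∑ i ∈ range (m + 1), C (prodCoeff q a m i) * ∏ k ∈ range i, f k := by
    rw [sum_range_succ, prodCoeff_eq_zero_of_lt hq a (by omega), map_zero, zero_mul, add_zero]
  rw [← htop, sum_range_succ' _ (m + 1), sum_range_succ' _ (m + 1), mul_sum, mul_add, mul_sum,
    ← add_assoc, ← sum_add_distrib]
  congr 1
  · refine sum_congr rfl fun i _ => ?_
    simp only [prodCoeff, map_add, map_mul, prod_range_succ']
    ring
  · simp [prodCoeff]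

variable (q)

noncomputable def shtuka (θ η : F) (k : ℕ) : RatFunc F :=
  (X - C (η ^ q ^ k))⁻¹ - C ((θ ^ q ^ k - η ^ q ^ k)⁻¹)

noncomputable def rho (η : F) (m : ℕ) : RatFunc F :=
  ∏ k ∈ range m, (X - C (η ^ q ^ k))

variable {q}

lemma X_sub_C_ne_zero (x : F) : (X - C x : RatFunc F) ≠ 0 := by
  rw [← algebraMap_X, ← algebraMap_C, ← map_sub]
  exact algebraMap_ne_zero (Polynomial.X_sub_C_ne_zero x)

lemma shtuka_succ (θ η : F) (k : ℕ) : shtuka q θ η (k + 1) = shtuka q (θ ^ q) (η ^ q) k := by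
  simp only [shtuka, ← pow_mul, ← pow_succ']

lemma shtuka_zero_mul_X_sub_C {θ η : F} (hθη : θ ≠ η) :
    shtuka q θ η 0 * (X - C η) = (C θ - X) / C (θ - η) := by
  have hC : (C (θ - η) : RatFunc F) ≠ 0 := (map_ne_zero C).mpr (sub_ne_zero.mpr hθη)
  simp only [shtuka, pow_zero, pow_one, map_inv₀]
  field_simp [X_sub_C_ne_zero η]
  simp only [map_sub]
  ring

lemma rho_ne_zero (η : F) (m : ℕ) : rho q η m ≠ 0 :=
  prod_ne_zero_iff.mpr fun _ _ => X_sub_C_ne_zero _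

lemma rho_succ (η : F) (m : ℕ) : rho q η (m + 1) = rho q η m * (X - C (η ^ q ^ m)) :=
  prod_range_succ _ _

lemma rho_succ' (η : F) (m : ℕ) : rho q η (m + 1) = (X - C η) * rho q (η ^ q) m := by
  simp only [rho, prod_range_succ', pow_zero, pow_one, ← pow_mul, ← pow_succ']
  ring

lemma shtuka_mul_add_eq_div_rho_succ {θ η : F} (hθη : θ ≠ η) (m : ℕ) (κ α : F) (u : RatFunc F) :
    shtuka q θ η 0 * (C (κ ^ q) * u / rho q (η ^ q) m) + C α * (C κ * u / rho q η m)
      = (C (κ ^ q) * (C θ - X) / C (θ - η) + C (α * κ) * (X - C (η ^ q ^ m)))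
          * u / rho q η (m + 1) := by
  have hρ := rho_ne_zero (q := q) η m
  have hρ' := rho_ne_zero (q := q) (η ^ q) m
  have hshift : shtuka q θ η 0 * (C (κ ^ q) * u / rho q (η ^ q) m) * rho q η (m + 1)
      = shtuka q θ η 0 * (X - C η) * C (κ ^ q) * u := by
    rw [rho_succ']; field_simp
  have hkeep : C α * (C κ * u / rho q η m) * rho q η (m + 1)
      = C (α * κ) * (X - C (η ^ q ^ m)) * u := by
    rw [rho_succ, map_mul]; field_simp
  rw [eq_div_iff (rho_ne_zero η (m + 1)), add_mul, hshift, hkeep,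
    shtuka_zero_mul_X_sub_C hθη]
  ring

lemma shtuka_numerator_of_lt {θ η ζ κq α κ' : F} (hθη : θ ≠ η) (hα : α * (θ - η) = κq)
    (hκ' : κ' * (θ - η) = κq * (θ - ζ)) :
    C κq * (C θ - X) / C (θ - η) + C α * (X - C ζ) = C κ' := by
  have hd : θ - η ≠ 0 := sub_ne_zero.mpr hθη
  rw [eq_div_of_mul_eq hd hα, eq_div_of_mul_eq hd hκ']
  simp only [map_div₀, map_mul, map_sub]
  field_simp [(map_ne_zero C).mpr hd]
  ring

lemma shtuka_numerator_of_le {θ η ζ κq α κ' : F} (hθη : θ ≠ η) (hζ : ζ ≠ 0)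
    (hα : α * (θ - η) * ζ = θ * κq) (hκ' : κ' * (θ - η) * ζ = κq * (θ - ζ)) :
    C κq * (C θ - X) / C (θ - η) + C α * (X - C ζ) = X * C κ' := by
  have hd : (θ - η) * ζ ≠ 0 := mul_ne_zero (sub_ne_zero.mpr hθη) hζ
  rw [mul_assoc] at hα hκ'
  rw [eq_div_of_mul_eq hd hα, eq_div_of_mul_eq hd hκ']
  simp only [map_div₀, map_mul, map_sub]
  field_simp [(map_ne_zero C).mpr (sub_ne_zero.mpr hθη), (map_ne_zero C).mpr hζ]
  ring

/-- The relations making `κ m * X ^ (m - l) / rho q η m` the image of `s₀` under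
`(τ + a (m-1)) ∘ ⋯ ∘ (τ + a 0)`. -/
structure IsShtukaScale (q l : ℕ) (θ η : F) (a κ : ℕ → F) : Prop where
  zero : κ 0 = 1
  mul_of_lt : ∀ m < l, a m * κ m * (θ - η) = κ m ^ q
  succ_of_lt : ∀ m < l, κ (m + 1) * (θ - η) = κ m ^ q * (θ - η ^ q ^ m)
  mul_of_le : ∀ m, l ≤ m → a m * κ m * (θ - η) * η ^ q ^ m = θ * κ m ^ q
  succ_of_le : ∀ m, l ≤ m → κ (m + 1) * (θ - η) * η ^ q ^ m = κ m ^ q * (θ - η ^ q ^ m)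

lemma IsShtukaScale.map {F' : Type*} [Field F'] {l : ℕ} {θ η : F} {a κ : ℕ → F}
    (h : IsShtukaScale q l θ η a κ) (σ : F →+* F') :
    IsShtukaScale q l (σ θ) (σ η) (fun k => σ (a k)) (fun k => σ (κ k)) where
  zero := by simp [h.zero]
  mul_of_lt m hm := by simpa using congrArg σ (h.mul_of_lt m hm)
  succ_of_lt m hm := by simpa using congrArg σ (h.succ_of_lt m hm)
  mul_of_le m hm := by simpa using congrArg σ (h.mul_of_le m hm)
  succ_of_le m hm := by simpa using congrArg σ (h.succ_of_le m hm)

theorem sum_prodCoeff_mul_prod_shtuka (σ : F →+* F) (hσ : ∀ x, σ x = x ^ q) {l : ℕ}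
    {θ η : F} {a κ : ℕ → F} (hθη : θ ≠ η) (hη : η ≠ 0) (h : IsShtukaScale q l θ η a κ)
    (m : ℕ) :
    ∑ i ∈ range (m + 1), C (prodCoeff q a m i) * ∏ k ∈ range i, shtuka q θ η k
      = C (κ m) * X ^ (m - l) / rho q η m := by
  have hq : q ≠ 0 := by
    rintro rfl
    simpa using hσ 0
  induction m generalizing θ η a κ with
  | zero => simp [prodCoeff, h.zero, rho]
  | succ m ih =>
    have htwist := ih (σ.injective.ne hθη) ((map_ne_zero σ).mpr hη) (h.map σ)
    have hpow (i : ℕ) : prodCoeff q a m i ^ q = prodCoeff q (fun k => a k ^ q) m i := by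
      simpa only [hσ] using map_prodCoeff σ a m i
    simp only [hσ] at htwist
    simp only [sum_prodCoeff_succ hq, shtuka_succ, hpow, htwist, ih hθη hη h, shtuka_mul_add_eq_div_rho_succ hθη]
    rcases lt_or_ge m l with hm | hm
    · rw [shtuka_numerator_of_lt hθη (h.mul_of_lt m hm) (h.succ_of_lt m hm),
        Nat.sub_eq_zero_of_le hm, Nat.sub_eq_zero_of_le hm.le]
    · rw [shtuka_numerator_of_le hθη (pow_ne_zero _ hη) (h.mul_of_le m hm)
        (h.succ_of_le m hm), Nat.sub_add_comm hm, pow_succ]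
      ring

variable (q)

def thetaProd (θ η : F) (m : ℕ) : F :=
  ∏ j ∈ range m, (θ - η ^ q ^ (m - 1 - j)) ^ q ^ j

def scaleDenom (l : ℕ) (θ η : F) (m : ℕ) : F :=
  (θ - η) ^ (∑ j ∈ range m, q ^ j) * η ^ ((m - l) * q ^ (m - 1))

variable {q}

lemma thetaProd_succ (θ η : F) (m : ℕ) :
    thetaProd q θ η (m + 1) = thetaProd q θ η m ^ q * (θ - η ^ q ^ m) := by
  rw [thetaProd, prod_range_succ', thetaProd, ← prod_pow]
  congr 1
  · refine prod_congr rfl fun j hj => ?_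
    rw [← pow_mul, ← pow_succ, show m + 1 - 1 - (j + 1) = m - 1 - j by omega]
  · simp

lemma thetaProd_ne_zero {θ η : F} (hθη : ∀ j, θ ≠ η ^ q ^ j) (m : ℕ) : thetaProd q θ η m ≠ 0 :=
  prod_ne_zero_iff.mpr fun _ _ => pow_ne_zero _ (sub_ne_zero.mpr (hθη _))

lemma scaleDenom_ne_zero {l : ℕ} {θ η : F} (hθη : θ ≠ η) (hη : η ≠ 0) (m : ℕ) :
    scaleDenom q l θ η m ≠ 0 :=
  mul_ne_zero (pow_ne_zero _ (sub_ne_zero.mpr hθη)) (pow_ne_zero _ hη)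

section scaleDenom

variable {l m : ℕ} (θ η : F)

lemma scaleDenom_succ_of_lt (hm : m < l) :
    scaleDenom q l θ η (m + 1) = scaleDenom q l θ η m ^ q * (θ - η) := by
  simp only [scaleDenom, Nat.sub_eq_zero_of_le hm, Nat.sub_eq_zero_of_le hm.le, geom_sum_succ]
  ring

lemma scaleDenom_pow_mul_of_lt (hm : m < l) :
    scaleDenom q l θ η m ^ q * (θ - η) = (θ - η) ^ q ^ m * scaleDenom q l θ η m := by
  rw [← scaleDenom_succ_of_lt θ η hm]
  simp only [scaleDenom, Nat.sub_eq_zero_of_le hm, Nat.sub_eq_zero_of_le hm.le, geom_sum_succ']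
  ring

lemma sub_mul_pow_pred_mul (m l q : ℕ) : (m - l) * q ^ (m - 1) * q = (m - l) * q ^ m := by
  cases m with
  | zero => simp
  | succ m => rw [Nat.add_sub_cancel, pow_succ, mul_assoc]

lemma scaleDenom_succ_of_le (hm : l ≤ m) :
    scaleDenom q l θ η (m + 1) = scaleDenom q l θ η m ^ q * ((θ - η) * η ^ q ^ m) := by
  have hexp : (m + 1 - l) * q ^ m = (m - l) * q ^ (m - 1) * q + q ^ m := by
    rw [sub_mul_pow_pred_mul, Nat.sub_add_comm hm]
    ring
  simp only [scaleDenom, Nat.add_sub_cancel, geom_sum_succ, hexp]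
  ring

lemma scaleDenom_pow_mul_of_le (hq : q ≠ 0) (hm : l ≤ m) :
    scaleDenom q l θ η m ^ q * ((θ - η) * η ^ q ^ m)
      = ((θ - η) ^ q ^ m * η ^ (q ^ (m - 1) * (q - 1) * (m - l) + q ^ m))
        * scaleDenom q l θ η m := by
  have hexp : (m - l) * q ^ (m - 1) * q
      = q ^ (m - 1) * (q - 1) * (m - l) + (m - l) * q ^ (m - 1) := by
    obtain ⟨r, rfl⟩ := Nat.exists_eq_add_one_of_ne_zero hq
    rw [Nat.add_sub_cancel]
    ring
  rw [← scaleDenom_succ_of_le θ η hm]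
  simp only [scaleDenom, Nat.add_sub_cancel, geom_sum_succ', Nat.sub_add_comm hm, add_mul,
    one_mul, ← sub_mul_pow_pred_mul, hexp]
  ring

end scaleDenom

theorem isShtukaScale_thetaProd_div (hq : q ≠ 0) {l : ℕ} {θ η : F} (hθη : θ ≠ η) (hη : η ≠ 0)
    {a : ℕ → F}
    (ha_lt : ∀ m < l, a m = thetaProd q θ η m ^ (q - 1) * ((θ - η) ^ q ^ m)⁻¹)
    (ha_le : ∀ m, l ≤ m → a m = θ * (η ^ (q ^ (m - 1) * (q - 1) * (m - l) + q ^ m))⁻¹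
      * thetaProd q θ η m ^ (q - 1) * ((θ - η) ^ q ^ m)⁻¹) :
    IsShtukaScale q l θ η a fun m => thetaProd q θ η m / scaleDenom q l θ η m := by
  have hd : θ - η ≠ 0 := sub_ne_zero.mpr hθη
  have hD := scaleDenom_ne_zero (q := q) (l := l) hθη hη
  have hA (m : ℕ) := pow_sub_one_mul hq (thetaProd q θ η m)
  refine ⟨by simp [thetaProd, scaleDenom], fun m hm => ?_, fun m hm => ?_, fun m hm => ?_,
    fun m hm => ?_⟩
  · have hs := scaleDenom_pow_mul_of_lt (q := q) θ η hm
    rw [ha_lt m hm, div_pow]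
    field_simp
    rw [div_eq_div_iff (hD m) (pow_ne_zero _ (hD m))]
    linear_combination (θ - η) * scaleDenom q l θ η m ^ q * hA m + thetaProd q θ η m ^ q * hs
  · rw [thetaProd_succ, scaleDenom_succ_of_lt θ η hm]
    rw [div_pow]
    field_simp
  · have hs := scaleDenom_pow_mul_of_le (q := q) θ η hq hm
    rw [ha_le m hm, div_pow]
    field_simp
    rw [div_eq_div_iff (hD m) (pow_ne_zero _ (hD m))]
    linear_combination θ * (θ - η) * η ^ q ^ m * scaleDenom q l θ η m ^ q * hA m
      + θ * thetaProd q θ η m ^ q * hs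
  · rw [thetaProd_succ, scaleDenom_succ_of_le θ η hm]
    rw [div_pow]
    field_simp

end StandardDrinfeld

open StandardDrinfeld

theorem standard_drinfeld_module_factorization_general
    (p q N : ℕ) (hp : Nat.Prime p) (hq : ∃ e : ℕ, 0 < e ∧ q = p ^ e)
    (F : Type*) [Field F] [CharP F p]
    (θ η : F) (hη : η ≠ 0)
    (hθη : ∀ a b : ℕ, θ ^ q ^ a ≠ η ^ q ^ b)
    (W : ℕ → ℕ) (hW : ∀ i, W i = (q ^ i - 1) / (q - 1))
    -- G_i = ∏_{m<i} (θ - η^{q^{i-1-m}})^{(q-1)·q^m}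
    (G : ℕ → F)
    (hG : ∀ i : ℕ, G i = ∏ m ∈ Finset.range i,
      (θ - η ^ q ^ (i - 1 - m)) ^ ((q - 1) * q ^ m))
    -- ⟪Θ⟫_l^i
    (Th : ℕ → ℕ → F)
    (hTh_lt : ∀ l i : ℕ, i < l → Th l i = G i * ((θ - η) ^ q ^ i)⁻¹)
    (hTh_ge : ∀ l i : ℕ, l ≤ i → Th l i
      = θ * (η ^ (q ^ (i - 1) * (q - 1) * (i - l) + q ^ i))⁻¹
        * G i * ((θ - η) ^ q ^ i)⁻¹)
    (n : ℕ) (hn : n ≤ N - 1)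
    -- coefficient lists of the iterated twisted-polynomial products
    -- (τ + a_{m-1}) ∘ ⋯ ∘ (τ + a_0) with a_i = ⟪Θ⟫_{N-n}^i
    (c : ℕ → ℕ → F)
    (hc0 : ∀ i : ℕ, c 0 i = if i = 0 then 1 else 0)
    (hcz : ∀ m : ℕ, c (m + 1) 0 = Th (N - n) m * c m 0)
    (hcs : ∀ m i : ℕ, c (m + 1) (i + 1) = (c m i) ^ q + Th (N - n) m * c m (i + 1))
    -- the twisted shtuka functions f^{(k)} and products s_i in F(t)
    (f : ℕ → RatFunc F)
    (hf : ∀ k : ℕ, f k = (RatFunc.X - RatFunc.C (η ^ q ^ k))⁻¹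
        - RatFunc.C ((θ ^ q ^ k - η ^ q ^ k)⁻¹))
    (s : ℕ → RatFunc F)
    (hs : ∀ i : ℕ, s i = ∏ k ∈ Finset.range i, f k) :
    RatFunc.X ^ n / (∏ k ∈ Finset.range N, (RatFunc.X - RatFunc.C (η ^ q ^ k)))
      = RatFunc.C ((η ^ q ^ (N - 1)) ^ n
            * (∏ m ∈ Finset.range N, ((θ - η ^ q ^ (N - 1 - m)) ^ q ^ m)⁻¹)
            * (θ - η) ^ W N)
        * ∑ i ∈ Finset.range (N + 1), RatFunc.C (c N i) * s i := by
  obtain ⟨e, he, hqe⟩ := hq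
  have : Fact p.Prime := ⟨hp⟩
  have hq2 : 2 ≤ q := hqe ▸ Nat.one_lt_pow he.ne' hp.one_lt
  have hθη₀ : θ ≠ η := by simpa using hθη 0 0
  have hG' (i : ℕ) : G i = thetaProd q θ η i ^ (q - 1) := by
    rw [hG, thetaProd, ← prod_pow]
    exact prod_congr rfl fun m _ => by rw [← pow_mul, mul_comm]
  have hscale := isShtukaScale_thetaProd_div (q := q) (l := N - n) (a := Th (N - n)) (by omega)
    hθη₀ hη
    (fun m hm => by rw [hTh_lt _ _ hm, hG']) (fun m hm => by rw [hTh_ge _ _ hm, hG'])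
  have hsum := sum_prodCoeff_mul_prod_shtuka (iterateFrobenius F p e)
    (by simp [iterateFrobenius_def, hqe]) hθη₀ hη hscale N
  have hconst : (η ^ q ^ (N - 1)) ^ n
      * (∏ m ∈ range N, ((θ - η ^ q ^ (N - 1 - m)) ^ q ^ m)⁻¹) * (θ - η) ^ W N
      * (thetaProd q θ η N / scaleDenom q (N - n) θ η N) = 1 := by
    have hA := thetaProd_ne_zero (q := q) (fun j => by simpa using hθη 0 j) N
    rw [prod_inv_distrib, ← thetaProd, scaleDenom, hW, ← Nat.geomSum_eq hq2,
      show N - (N - n) = n by omega, ← pow_mul, mul_comm (q ^ (N - 1))]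
    field_simp [sub_ne_zero.mpr hθη₀]
  obtain rfl := eq_prodCoeff hc0 hcz hcs
  obtain rfl : f = shtuka q θ η := funext hf
  obtain rfl : s = fun i => ∏ k ∈ range i, shtuka q θ η k := funext hs
  rw [hsum, show N - (N - n) = n by omega, ← mul_div_assoc, ← mul_assoc, ← map_mul, hconst,
    map_one, one_mul, rho]

/-- Explicit factorization of the standard rank-one Drinfeld
module: with `(c_0,…,c_N)` the coefficient list of
`(τ + ⟪Θ⟫_{N-n}^{N-1}) ∘ ⋯ ∘ (τ + ⟪Θ⟫_{N-n}^{0})`, one has in `F(t)`: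
`t^n/∏_{k<N}(t-η^{q^k}) = (η^{q^{N-1}})^n · (∏_{m<N}(θ-η^{q^{N-1-m}})^{-q^m}) · (θ-η)^{W_N}
· ∑_{i≤N} c_i·s_i(t)`. -/
theorem standard_drinfeld_module_factorization
    (p q N : ℕ) (hp : Nat.Prime p) (hq : ∃ e : ℕ, 0 < e ∧ q = p ^ e)
    (hN : 2 ≤ N)
    (F : Type*) [Field F] [CharP F p]
    (θ η : F) (hη : η ≠ 0) (hper : η ^ q ^ N = η)
    (hθη : ∀ a b : ℕ, θ ^ q ^ a ≠ η ^ q ^ b)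
    (hθ : ∀ m : ℕ, 1 ≤ m → θ ^ q ^ m ≠ θ)
    (W : ℕ → ℕ) (hW : ∀ i, W i = (q ^ i - 1) / (q - 1))
    -- G_i = ∏_{m<i} (θ - η^{q^{i-1-m}})^{(q-1)·q^m}
    (G : ℕ → F)
    (hG : ∀ i : ℕ, G i = ∏ m ∈ Finset.range i,
      (θ - η ^ q ^ (i - 1 - m)) ^ ((q - 1) * q ^ m))
    -- ⟪Θ⟫_l^i
    (Th : ℕ → ℕ → F)
    (hTh_lt : ∀ l i : ℕ, i < l → Th l i = G i * ((θ - η) ^ q ^ i)⁻¹)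
    (hTh_ge : ∀ l i : ℕ, l ≤ i → Th l i
      = θ * (η ^ (q ^ (i - 1) * (q - 1) * (i - l) + q ^ i))⁻¹
        * G i * ((θ - η) ^ q ^ i)⁻¹)
    (n : ℕ) (hn : n ≤ N - 1)
    -- coefficient lists of the iterated twisted-polynomial products
    -- (τ + a_{m-1}) ∘ ⋯ ∘ (τ + a_0) with a_i = ⟪Θ⟫_{N-n}^i
    (c : ℕ → ℕ → F)
    (hc0 : ∀ i : ℕ, c 0 i = if i = 0 then 1 else 0)
    (hcz : ∀ m : ℕ, c (m + 1) 0 = Th (N - n) m * c m 0)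
    (hcs : ∀ m i : ℕ, c (m + 1) (i + 1) = (c m i) ^ q + Th (N - n) m * c m (i + 1))
    -- the twisted shtuka functions f^{(k)} and products s_i in F(t)
    (f : ℕ → RatFunc F)
    (hf : ∀ k : ℕ, f k = (RatFunc.X - RatFunc.C (η ^ q ^ k))⁻¹
        - RatFunc.C ((θ ^ q ^ k - η ^ q ^ k)⁻¹))
    (s : ℕ → RatFunc F)
    (hs : ∀ i : ℕ, s i = ∏ k ∈ Finset.range i, f k) :
    RatFunc.X ^ n / (∏ k ∈ Finset.range N, (RatFunc.X - RatFunc.C (η ^ q ^ k)))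
      = RatFunc.C ((η ^ q ^ (N - 1)) ^ n
            * (∏ m ∈ Finset.range N, ((θ - η ^ q ^ (N - 1 - m)) ^ q ^ m)⁻¹)
            * (θ - η) ^ W N)
        * ∑ i ∈ Finset.range (N + 1), RatFunc.C (c N i) * s i :=
  standard_drinfeld_module_factorization_general p q N hp hq F θ η hη hθη W hW G hG Th hTh_lt hTh_ge
    n hn c hc0 hcz hcs f hf s hs
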